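/- arXiv:2412.13235 — 4 statements merged into one kernel-verified Lean document; each statement's English description precedes it below -/
import Mathlib

section
/- Enforcing an arc makes it a bridge (forward direction of Proposition 2.5): let (u, v) be an arc of G and let G' be the subgraph obtained by enforcing (u, v). Then for all vertices s, t with τ(s) ≤ τ(u) and τ(u) < τ(t), every s,t-walk in G' contains the arc (u, v). -/
variable {V : Type*} [Fintype V]

/-- An `s,t`-walk in the directed graph with arc set `A` is a finite list of vertices
starting at `s` and ending at `t` whose consecutive pairs are all arcs. -/
def IsWalk (A : Set (V × V)) (s t : V) (p : List V) : Prop :=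
  p.head? = some s ∧ p.getLast? = some t ∧ ∀ a ∈ p.zip p.tail, a ∈ A

/-- The arcs deleted when enforcing the arc `uv = (u, v)`: every arc `(u, w)` with
`w ≠ v`, and every arc `(i, j)` with `τ i < τ u < τ j`. -/
def EnfDeleted (τ : V → ℕ) (uv a : V × V) : Prop :=
  (a.1 = uv.1 ∧ a.2 ≠ uv.2) ∨ (τ a.1 < τ uv.1 ∧ τ uv.1 < τ a.2)

/-- Enforcing an arc `uv ∈ A`: the subgraph of `G` obtained by deleting every arc
`(u, w)` with `w ≠ v` and every arc `(i, j)` with `τ i < τ u < τ j`. -/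
def enforce (A : Set (V × V)) (τ : V → ℕ) (uv : V × V) : Set (V × V) :=
  {a ∈ A | ¬ EnfDeleted τ uv a}

/-- Enforcing an arc makes it a bridge: if `τ s ≤ τ u < τ t`, then every `s,t`-walk in
the subgraph obtained by enforcing `(u, v)` contains the arc `(u, v)`. -/
theorem enforced_arc_in_every_walk (A : Set (V × V)) (τ : V → ℕ)
    (hinj : Function.Injective τ) (htopo : ∀ a ∈ A, τ a.1 < τ a.2)
    (u v : V) (huv : (u, v) ∈ A) (s t : V) (hs : τ s ≤ τ u) (ht : τ u < τ t)
    (p : List V) (hp : IsWalk (enforce A τ (u, v)) s t p) :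
    (u, v) ∈ p.zip p.tail := by
  induction p generalizing s with
  | nil => simp [IsWalk] at hp
  | cons x q ih =>
    obtain ⟨h1, h2, h3⟩ := hp
    simp only [List.head?_cons, Option.some.injEq] at h1
    subst h1
    cases q with
    | nil =>
      simp only [List.getLast?_singleton, Option.some.injEq] at h2
      subst h2
      omega
    | cons y r =>
      have harc : (x, y) ∈ enforce A τ (u, v) := h3 _ (by simp)
      obtain ⟨hA, hnd⟩ := harc
      by_cases hy : τ u < τ y
      · have hxu : τ x = τ u := by
          rcases lt_or_eq_of_le hs with h | h
          · exact absurd (Or.inr ⟨h, hy⟩) hnd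
          · exact h
        have hxu' : x = u := hinj hxu
        subst hxu'
        have hyv : y = v := by
          by_contra hne
          exact hnd (Or.inl ⟨rfl, hne⟩)
        subst hyv
        simp
      · have hwalk : IsWalk (enforce A τ (u, v)) y t (y :: r) := by
          refine ⟨rfl, ?_, ?_⟩
          · rw [← h2]; simp [List.getLast?_cons_cons]
          · intro a ha
            exact h3 a (by simpa using List.mem_cons_of_mem _ ha)
        have := ih y (le_of_not_gt hy) hwalk
        simp only [List.zip_cons_cons, List.tail_cons, List.mem_cons]
        exact Or.inr (by simpa using this)
end

section
/- Proposition 2.5 (characterization of the induced graph): let T be an assignment over the graph variables Y such that for every positive literal y ∈ T with σ⁻¹(y) = (u, v) one has τ(s) ≤ τ(u) and τ(u) < τ(t). Then a list of vertices is an s,t-walk in the induced graph G|T if and only if it is an s,t-walk in G that agrees with T. -/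
variable {V : Type*} [Fintype V]

variable {Y : Type*}

/-- An assignment over the graph variables: a finite set of literals with no
complementary pair. -/
def IsAssignment (T : Finset (Y × Bool)) : Prop := ∀ l ∈ T, (l.1, !l.2) ∉ T

/-- The graph induced by the assignment `T`: the subgraph of `G` obtained by deleting
`σ⁻¹ y` for every negative literal `¬y ∈ T` and deleting, for every positive literal
`y ∈ T`, all arcs removed by enforcing `σ⁻¹ y`. -/
def induced (A : Set (V × V)) (τ : V → ℕ) (σ : A ≃ Y) (T : Finset (Y × Bool)) :
    Set (V × V) :=
  {a ∈ A | (∀ y : Y, (y, false) ∈ T → a ≠ (σ.symm y : V × V)) ∧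
           (∀ y : Y, (y, true) ∈ T → ¬ EnfDeleted τ (σ.symm y : V × V) a)}

/-- A walk `p` agrees with the assignment `T` if it contains `σ⁻¹ y` for every positive
literal `y ∈ T` and does not contain `σ⁻¹ y` for any negative literal `¬y ∈ T`. -/
def Agrees {A : Set (V × V)} (σ : A ≃ Y) (p : List V) (T : Finset (Y × Bool)) : Prop :=
  (∀ y : Y, (y, true) ∈ T → ((σ.symm y : V × V)) ∈ p.zip p.tail) ∧
  (∀ y : Y, (y, false) ∈ T → ((σ.symm y : V × V)) ∉ p.zip p.tail)

/-- Along a list whose consecutive pairs strictly increase in `τ`, every arc's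
first vertex is at least the head. -/
private lemma head_le_of_chain (τ : V → ℕ) :
    ∀ (q : List V) (y : V), q.head? = some y →
    (∀ a ∈ q.zip q.tail, τ a.1 < τ a.2) →
    ∀ c ∈ q.zip q.tail, τ y ≤ τ c.1 := by
  intro q
  induction q with
  | nil => simp
  | cons x r ih =>
    intro y hy hchain c hc
    simp only [List.head?_cons, Option.some.injEq] at hy
    subst hy
    cases r with
    | nil => simp at hc
    | cons z r' =>
      simp only [List.tail_cons, List.zip_cons_cons, List.mem_cons] at hc
      rcases hc with rfl | hc
      · exact le_refl _
      · have h1 : τ x < τ z := hchain (x, z) (by simp)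
        have h2 : τ z ≤ τ c.1 := by
          apply ih z rfl _ c hc
          intro a ha
          exact hchain a (List.mem_cons_of_mem _ ha)
        omega

/-- Two arcs of a `τ`-increasing list are either equal or disjoint in `τ`-order. -/
private lemma arcs_pairwise (τ : V → ℕ) :
    ∀ (q : List V), (∀ a ∈ q.zip q.tail, τ a.1 < τ a.2) →
    ∀ a ∈ q.zip q.tail, ∀ b ∈ q.zip q.tail,
      a = b ∨ τ a.2 ≤ τ b.1 ∨ τ b.2 ≤ τ a.1 := by
  intro q
  induction q with
  | nil => simp
  | cons x r ih =>
    intro hchain a ha b hb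
    cases r with
    | nil => simp at ha
    | cons z r' =>
      have hchain' : ∀ a ∈ (z :: r').zip (z :: r').tail, τ a.1 < τ a.2 := by
        intro a ha; exact hchain a (List.mem_cons_of_mem _ ha)
      simp only [List.tail_cons, List.zip_cons_cons, List.mem_cons] at ha hb
      rcases ha with rfl | ha
      · rcases hb with rfl | hb
        · exact Or.inl rfl
        · have := head_le_of_chain τ (z :: r') z rfl hchain' b hb
          exact Or.inr (Or.inl this)
      · rcases hb with rfl | hb
        · have := head_le_of_chain τ (z :: r') z rfl hchain' a ha
          exact Or.inr (Or.inr this)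
        · exact ih hchain' a ha b hb

/-- If a walk starts no later than `u`, ends after `u`, and none of its arcs is
deleted by enforcing `(u, v)`, then it contains the arc `(u, v)`. -/
private lemma mem_zip_of_walk (τ : V → ℕ) (hinj : Function.Injective τ) (u v : V) :
    ∀ (p : List V) (s t : V), p.head? = some s → p.getLast? = some t →
    (∀ a ∈ p.zip p.tail, ¬ EnfDeleted τ (u, v) a) →
    τ s ≤ τ u → τ u < τ t → (u, v) ∈ p.zip p.tail := by
  intro p
  induction p with
  | nil => simp
  | cons x q ih =>
    intro s t hh hl harcs hsu hut
    simp only [List.head?_cons, Option.some.injEq] at hh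
    subst hh
    cases q with
    | nil =>
      simp only [List.getLast?_singleton, Option.some.injEq] at hl
      subst hl
      omega
    | cons y r =>
      have hxy : ((x, y) : V × V) ∈ (x :: y :: r).zip (x :: y :: r).tail := by simp
      by_cases hc : τ u < τ y
      · have hnd := harcs (x, y) hxy
        simp only [EnfDeleted, not_or, not_and_or] at hnd
        obtain ⟨h1, h2⟩ := hnd
        have hxu : x = u := by
          apply hinj
          rcases h2 with h2 | h2
          · omega
          · omega
        subst hxu
        have hyv : y = v := by
          rcases h1 with h1 | h1
          · exact absurd rfl h1
          · simpa using h1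
        subst hyv
        simpa using hxy
      · have hl' : (y :: r).getLast? = some t := by
          rwa [List.getLast?_cons_cons] at hl
        have harcs' : ∀ a ∈ (y :: r).zip (y :: r).tail, ¬ EnfDeleted τ (u, v) a := by
          intro a ha; exact harcs a (List.mem_cons_of_mem _ ha)
        have := ih y t rfl hl' harcs' (by omega) hut
        simp only [List.tail_cons, List.zip_cons_cons, List.mem_cons]
        exact Or.inr this

/-- Characterization of the induced graph: if for every positive literal `y ∈ T` with
`σ⁻¹ y = (u, v)` one has `τ s ≤ τ u < τ t`, then a list of vertices is an `s,t`-walk in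
the induced graph `G|T` iff it is an `s,t`-walk in `G` agreeing with `T`. -/
theorem walk_induced_iff_agrees (A : Set (V × V)) (τ : V → ℕ)
    (hinj : Function.Injective τ) (htopo : ∀ a ∈ A, τ a.1 < τ a.2)
    (σ : A ≃ Y) (T : Finset (Y × Bool)) (hT : IsAssignment T) (s t : V)
    (hpos : ∀ y : Y, (y, true) ∈ T →
      τ s ≤ τ (σ.symm y : V × V).1 ∧ τ (σ.symm y : V × V).1 < τ t)
    (p : List V) :
    IsWalk (induced A τ σ T) s t p ↔ (IsWalk A s t p ∧ Agrees σ p T) := by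

  constructor
  · rintro ⟨hh, hl, harcs⟩
    have harcsA : ∀ a ∈ p.zip p.tail, a ∈ A := fun a ha => (harcs a ha).1
    refine ⟨⟨hh, hl, harcsA⟩, ?_, ?_⟩
    · intro y hy
      obtain ⟨h1, h2⟩ := hpos y hy
      apply mem_zip_of_walk τ hinj _ _ p s t hh hl ?_ h1 h2
      intro a ha
      have := (harcs a ha).2.2 y hy
      simpa using this
    · intro y hy hmem
      exact (harcs _ hmem).2.1 y hy rfl
  · rintro ⟨⟨hh, hl, harcs⟩, hagree⟩
    refine ⟨hh, hl, ?_⟩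
    intro a ha
    refine ⟨harcs a ha, ?_, ?_⟩
    · intro y hy heq
      exact hagree.2 y hy (heq ▸ ha)
    · intro y hy hdel
      have huv : ((σ.symm y : V × V)) ∈ p.zip p.tail := hagree.1 y hy
      set uv := ((σ.symm y : V × V)) with huvdef
      have huvA : uv ∈ A := (σ.symm y).2
      have hchain : ∀ a ∈ p.zip p.tail, τ a.1 < τ a.2 := fun a ha =>
        htopo a (harcs a ha)
      have hpw := arcs_pairwise τ p hchain a ha uv huv
      have haA : τ a.1 < τ a.2 := htopo a (harcs a ha)
      have huvlt : τ uv.1 < τ uv.2 := htopo uv huvA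
      rcases hdel with ⟨h1, h2⟩ | ⟨h1, h2⟩
      · have h1' : τ a.1 = τ uv.1 := by rw [h1]
        rcases hpw with rfl | h | h
        · exact h2 rfl
        · omega
        · omega
      · rcases hpw with rfl | h | h
        · omega
        · omega
        · omega
end

section
/- Validity of the parent-optimality check: equip each arc a ∈ A with a nonnegative real weight w(a) and let the weight of a walk be the sum of the weights of its arcs. If T ⊆ T' are assignments over the graph variables Y, p is an s,t-walk of minimum weight among all s,t-walks in the induced graph G|T, and p is also an s,t-walk in G|T', then p has minimum weight among all s,t-walks in G|T'. -/
variable {V : Type*} [Fintype V]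

variable {Y : Type*}

/-- The weight of a walk is the sum of the weights of its arcs. -/
def walkWeight (w : V × V → ℝ) (p : List V) : ℝ :=
  ((p.zip p.tail).map w).sum

/-- Validity of the parent-optimality check: if `T ⊆ T'` are assignments, `p` is a
minimum-weight `s,t`-walk in `G|T`, and `p` is also an `s,t`-walk in `G|T'`, then `p`
has minimum weight among all `s,t`-walks in `G|T'`. -/
theorem parent_optimality_check (A : Set (V × V)) (τ : V → ℕ)
    (hinj : Function.Injective τ) (htopo : ∀ a ∈ A, τ a.1 < τ a.2)
    (w : V × V → ℝ) (hw : ∀ a ∈ A, 0 ≤ w a)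
    (σ : A ≃ Y) (T T' : Finset (Y × Bool))
    (hT : IsAssignment T) (hT' : IsAssignment T') (hsub : T ⊆ T')
    (s t : V) (p : List V)
    (hp : IsWalk (induced A τ σ T) s t p)
    (hmin : ∀ q : List V, IsWalk (induced A τ σ T) s t q → walkWeight w p ≤ walkWeight w q)
    (hp' : IsWalk (induced A τ σ T') s t p) :
    ∀ q : List V, IsWalk (induced A τ σ T') s t q → walkWeight w p ≤ walkWeight w q := by
  intro q hq
  apply hmin
  obtain ⟨h1, h2, h3⟩ := hq
  refine ⟨h1, h2, fun a ha => ?_⟩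
  obtain ⟨hA, hneg, hpos⟩ := h3 a ha
  exact ⟨hA, fun y hy => hneg y (hsub hy), fun y hy => hpos y (hsub hy)⟩
end

section
/- Branching on a graph variable splits the walks of a node exactly (key step of Proposition 2.6): let T be an assignment over the graph variables Y, let (u, v) ∈ A be an arc with y := σ((u, v)) such that neither y nor ¬y belongs to T, and suppose τ(s) ≤ τ(u) and τ(u) < τ(t). Then every s,t-walk p in the induced graph G|T is an s,t-walk in exactly one of G|(T ∪ {y}) and G|(T ∪ {¬y}): it is an s,t-walk in G|(T ∪ {y}) if p contains the arc (u, v), and an s,t-walk in G|(T ∪ {¬y}) if it does not. -/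
variable {V : Type*} [Fintype V]

variable {Y : Type*}

lemma mem_zip_tail' {W : Type*} {p : List W} {a : W × W} :
    a ∈ p.zip p.tail ↔ ∃ i, ∃ h : i + 1 < p.length,
      p[i]'(Nat.lt_of_succ_lt h) = a.1 ∧ p[i+1]'h = a.2 := by
  rw [List.mem_iff_getElem]
  have hlen : (p.zip p.tail).length = p.length - 1 := by
    simp [List.length_zip, List.length_tail]
  constructor
  · rintro ⟨i, hi, rfl⟩
    have h1 : i + 1 < p.length := by omega
    refine ⟨i, h1, ?_, ?_⟩
    · simp [List.getElem_zip]
    · simp [List.getElem_zip, List.getElem_tail]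
  · rintro ⟨i, h, h1, h2⟩
    refine ⟨i, by omega, ?_⟩
    simp [List.getElem_zip, List.getElem_tail, h1, h2]

lemma exists_cross' {W : Type*} (τ : W → ℕ) (u : W) :
    ∀ (p : List W) (s t : W), p.head? = some s → p.getLast? = some t →
    τ s ≤ τ u → τ u < τ t → ∃ a ∈ p.zip p.tail, τ a.1 ≤ τ u ∧ τ u < τ a.2 := by
  intro p
  induction p with
  | nil => simp
  | cons x q ih =>
    intro s t hh hl hs ht
    cases q with
    | nil =>
      simp at hh hl
      subst hh; subst hl; omega
    | cons b r =>
      simp at hh; subst hh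
      by_cases hb : τ u < τ b
      · exact ⟨(x, b), by simp, hs, hb⟩
      · obtain ⟨a, ha1, ha2⟩ := ih b t (by simp) (by simpa using hl) (by omega) ht
        refine ⟨a, ?_, ha2⟩
        simpa using Or.inr ha1

lemma mono_of_arcs' {W : Type*} (τ : W → ℕ) (p : List W)
    (h : ∀ i (hi : i + 1 < p.length), τ (p[i]'(Nat.lt_of_succ_lt hi)) < τ (p[i+1]'hi)) :
    ∀ d i (hi : i + d < p.length), τ (p[i]'(by omega)) ≤ τ (p[i+d]'hi) := by
  intro d
  induction d with
  | zero => intro i hi; simp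
  | succ n ih =>
    intro i hi
    have h1 := ih i (by omega)
    have h2 := h (i + n) (by omega)
    have h3 : p[i+(n+1)]'hi = p[i+n+1]'(by omega) := rfl
    rw [h3]
    omega

/-- Branching on a graph variable splits the walks of a node exactly: if `y = σ (u, v)`
is unassigned by `T` and `τ s ≤ τ u < τ t`, then every `s,t`-walk `p` in `G|T` is an
`s,t`-walk in `G|(T ∪ {y})` iff `p` contains `(u, v)`, and an `s,t`-walk in
`G|(T ∪ {¬y})` iff it does not; in particular it is a walk in exactly one of the two. -/
theorem branching_splits_walks [DecidableEq Y] (A : Set (V × V)) (τ : V → ℕ)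
    (hinj : Function.Injective τ) (htopo : ∀ a ∈ A, τ a.1 < τ a.2)
    (σ : A ≃ Y) (T : Finset (Y × Bool)) (hT : IsAssignment T)
    (u v : V) (ha : (u, v) ∈ A) (y : Y) (hy : y = σ ⟨(u, v), ha⟩)
    (hy1 : (y, true) ∉ T) (hy2 : (y, false) ∉ T)
    (s t : V) (hs : τ s ≤ τ u) (ht : τ u < τ t)
    (p : List V) (hp : IsWalk (induced A τ σ T) s t p) :
    (IsWalk (induced A τ σ (insert (y, true) T)) s t p ↔ (u, v) ∈ p.zip p.tail) ∧
    (IsWalk (induced A τ σ (insert (y, false) T)) s t p ↔ (u, v) ∉ p.zip p.tail) := by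
  have hsymm : ((σ.symm y : A) : V × V) = (u, v) := by rw [hy, Equiv.symm_apply_apply]
  have hpos : ∀ a : V × V, a ∈ induced A τ σ (insert (y, true) T) ↔
      a ∈ induced A τ σ T ∧ ¬ EnfDeleted τ (u, v) a := by
    intro a
    simp only [induced, Set.mem_setOf_eq, Finset.mem_insert, Prod.mk.injEq]
    constructor
    · rintro ⟨h1, h2, h3⟩
      exact ⟨⟨h1, fun y' hy' => h2 y' (Or.inr hy'), fun y' hy' => h3 y' (Or.inr hy')⟩,
        hsymm ▸ h3 y (by simp)⟩
    · rintro ⟨⟨h1, h2, h3⟩, h4⟩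
      refine ⟨h1, fun y' hy' => ?_, fun y' hy' => ?_⟩
      · rcases hy' with ⟨_, h⟩ | h
        · exact absurd h (by simp)
        · exact h2 y' h
      · rcases hy' with ⟨hyy, _⟩ | h
        · subst hyy; rwa [hsymm]
        · exact h3 y' h
  have hneg : ∀ a : V × V, a ∈ induced A τ σ (insert (y, false) T) ↔
      a ∈ induced A τ σ T ∧ a ≠ (u, v) := by
    intro a
    simp only [induced, Set.mem_setOf_eq, Finset.mem_insert, Prod.mk.injEq]
    constructor
    · rintro ⟨h1, h2, h3⟩
      exact ⟨⟨h1, fun y' hy' => h2 y' (Or.inr hy'), fun y' hy' => h3 y' (Or.inr hy')⟩,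
        hsymm ▸ h2 y (by simp)⟩
    · rintro ⟨⟨h1, h2, h3⟩, h4⟩
      refine ⟨h1, fun y' hy' => ?_, fun y' hy' => ?_⟩
      · rcases hy' with ⟨hyy, _⟩ | h
        · subst hyy; rwa [hsymm]
        · exact h2 y' h
      · rcases hy' with ⟨_, h⟩ | h
        · exact absurd h (by simp)
        · exact h3 y' h
  obtain ⟨hh, hl, harc⟩ := hp
  have harcA : ∀ a ∈ p.zip p.tail, a ∈ A := fun a h => (harc a h).1
  have hinc : ∀ i (hi : i + 1 < p.length),
      τ (p[i]'(Nat.lt_of_succ_lt hi)) < τ (p[i+1]'hi) := by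
    intro i hi
    have hz : (p[i]'(Nat.lt_of_succ_lt hi), p[i+1]'hi) ∈ p.zip p.tail :=
      mem_zip_tail'.mpr ⟨i, hi, rfl, rfl⟩
    exact htopo _ (harcA _ hz)
  have hmono := mono_of_arcs' τ p hinc
  have hle : ∀ i j (hij : i ≤ j) (hj : j < p.length), τ (p[i]'(by omega)) ≤ τ (p[j]'hj) := by
    intro i j hij hj
    have h0 : i + (j - i) < p.length := by omega
    have := hmono (j - i) i h0
    have e : i + (j - i) = j := by omega
    rw [show p[i + (j-i)]'h0 = p[j]'hj by congr 1] at this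
    exact this
  have huv : τ u < τ v := htopo (u, v) ha
  constructor
  · constructor
    · intro hw
      obtain ⟨a, hap, ha1, ha2⟩ := exists_cross' τ u p s t hh hl hs ht
      have hmem := (hpos a).mp (hw.2.2 a hap)
      have hnd := hmem.2
      rw [EnfDeleted] at hnd
      push_neg at hnd
      have h1 : ¬ (τ a.1 < τ u) := fun hlt => by
        have h2' : τ a.2 ≤ τ u := hnd.2 hlt
        omega
      have e1 : a.1 = u := hinj (by omega)
      have e2 : a.2 = v := hnd.1 e1
      have : a = (u, v) := Prod.ext e1 e2
      rwa [this] at hap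
    · intro hm
      obtain ⟨k, hk, hku0, hkv0⟩ := mem_zip_tail'.mp hm
      have hku : p[k]'(Nat.lt_of_succ_lt hk) = u := hku0
      have hkv : p[k+1]'hk = v := hkv0
      refine ⟨hh, hl, fun a hap => (hpos a).mpr ⟨harc a hap, ?_⟩⟩
      obtain ⟨m, hm1, hma, hmb⟩ := mem_zip_tail'.mp hap
      have hτa : τ a.1 < τ a.2 := htopo a (harcA a hap)
      intro hd
      rcases Nat.lt_trichotomy m k with hmk | hmk | hmk
      · have key : τ a.2 ≤ τ u := by
          rw [← hmb, ← hku]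
          exact hle (m+1) k (by omega) (by omega)
        rcases hd with ⟨e1, _⟩ | ⟨l1, l2⟩
        · have e1' : τ a.1 = τ u := congrArg τ e1
          omega
        · have l2' : τ u < τ a.2 := l2
          omega
      · subst hmk
        have e1 : a.1 = u := by rw [← hma, hku]
        have e2 : a.2 = v := by rw [← hmb, hkv]
        rcases hd with ⟨_, e⟩ | ⟨l1, l2⟩
        · exact e e2
        · have e1' : τ a.1 = τ u := congrArg τ e1
          have l1' : τ a.1 < τ u := l1
          omega
      · have key : τ v ≤ τ a.1 := by
          rw [← hma, ← hkv]
          exact hle (k+1) m (by omega) (by omega)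
        rcases hd with ⟨e1, _⟩ | ⟨l1, l2⟩
        · have e1' : τ a.1 = τ u := congrArg τ e1
          omega
        · have l1' : τ a.1 < τ u := l1
          omega
  · constructor
    · intro hw hm
      exact ((hneg (u, v)).mp (hw.2.2 (u, v) hm)).2 rfl
    · intro hm
      exact ⟨hh, hl, fun a hap => (hneg a).mpr ⟨harc a hap, fun e => hm (e ▸ hap)⟩⟩
end
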